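/- arXiv:2604.00429 — 5 statements merged into one kernel-verified Lean document; each statement's English description precedes it below -/
import Mathlib

section
/- Let N be a positive natural number and a : Fin N → ℝ. There exists z : Fin N → ℝ such that for every i, a i + ∑_{j ≠ i} (z i − z j) ≤ 0, if and only if ∑_i a i ≤ 0. -/
/-!
Summing the local constraints over all agents cancels the mismatch terms, since
`∑ i, ∑ j, (z i - z j) = 0`; this gives `∑ i, a i ≤ 0`. Conversely, the mismatch
`z i = -a i / N` turns every local constraint into `(∑ j, a j) / N ≤ 0`.
-/

open Finset

section

variable {ι : Type*} [Fintype ι]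

theorem sum_erase_sub_eq_sum_sub {M : Type*} [AddCommGroup M] [DecidableEq ι]
    (z : ι → M) (i : ι) : ∑ j ∈ univ.erase i, (z i - z j) = ∑ j, (z i - z j) :=
  sum_erase _ (sub_self _)

theorem sum_sum_sub_eq_zero {M : Type*} [AddCommGroup M] (z : ι → M) :
    ∑ i, ∑ j, (z i - z j) = 0 := by
  simp only [sum_sub_distrib]
  exact sub_eq_zero.2 sum_comm

theorem add_sum_sub_neg_div_card {𝕜 : Type*} [Field 𝕜] [CharZero 𝕜] (a : ι → 𝕜) (i : ι) :
    a i + ∑ j, (-a i / Fintype.card ι - -a j / Fintype.card ι)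
      = (∑ j, a j) / Fintype.card ι := by
  have : Nonempty ι := ⟨i⟩
  have hcard : (Fintype.card ι : 𝕜) ≠ 0 := Nat.cast_ne_zero.2 Fintype.card_ne_zero
  rw [sum_sub_distrib, sum_const, card_univ, nsmul_eq_mul, ← sum_div, sum_neg_distrib]
  field_simp
  ring

end

theorem mismatch_decoupling_complete_general (N : ℕ) (a : Fin N → ℝ) :
    (∃ z : Fin N → ℝ,
        ∀ i : Fin N, a i + ∑ j ∈ Finset.univ.erase i, (z i - z j) ≤ 0)
      ↔ ∑ i, a i ≤ 0 := by
  simp only [sum_erase_sub_eq_sum_sub]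
  constructor
  · rintro ⟨z, hz⟩
    calc ∑ i, a i = ∑ i, (a i + ∑ j, (z i - z j)) := by
          rw [sum_add_distrib, sum_sum_sub_eq_zero, add_zero]
      _ ≤ 0 := sum_nonpos fun i _ ↦ hz i
  · intro ha
    refine ⟨fun i ↦ -a i / Fintype.card (Fin N), fun i ↦ ?_⟩
    rw [add_sum_sub_neg_div_card]
    exact div_nonpos_of_nonpos_of_nonneg ha (Nat.cast_nonneg _)

/-- Mismatch-variable decoupling over a complete communication graph:
the coupled inequality `∑ i, a i ≤ 0` can be split exactly into `N` local
inequalities by introducing mismatch variables `z i`. -/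
theorem mismatch_decoupling_complete (N : ℕ) (hN : 0 < N) (a : Fin N → ℝ) :
    (∃ z : Fin N → ℝ,
        ∀ i : Fin N, a i + ∑ j ∈ Finset.univ.erase i, (z i - z j) ≤ 0)
      ↔ ∑ i, a i ≤ 0 :=
  mismatch_decoupling_complete_general N a
end

section
/- Let N be a positive natural number, w : Fin N → Fin N → ℝ be symmetric (w i j = w j i) and nonnegative (w i j ≥ 0), and suppose the support graph of w is connected. Then for every a : Fin N → ℝ, there exists z : Fin N → ℝ such that a i + ∑_{j ≠ i} w i j * (z i − z j) ≤ 0 for every i, if and only if ∑_i a i ≤ 0. -/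
/-!
The mismatch terms are the entries of `L z` for the weighted Laplacian `L` of `w`. Symmetry of
`w` makes every `L z` sum to zero, which gives necessity. Conversely, the energy identity
`2 ⟨z, L z⟩ = ∑ i j, w i j (z i - z j)²` shows that on a connected support graph the kernel of
`L` consists of the constants, so by rank–nullity the range of `L` is the whole hyperplane
`∑ i, y i = 0`. Solving `L z = m - a`, with `m` the mean of `a`, leaves every agent the
slack `-m ≥ 0`.
-/

/-- The support graph of the weight function `w`: distinct vertices `i`, `j` are
adjacent if and only if `w i j > 0` (for symmetric `w`). -/
def supportGraph {N : ℕ} (w : Fin N → Fin N → ℝ) : SimpleGraph (Fin N) :=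
  SimpleGraph.fromRel (fun i j => 0 < w i j)

open Finset Module

theorem LinearMap.range_eq_ker_of_comp_eq_zero {K V : Type*} [Field K] [AddCommGroup V]
    [Module K V] [FiniteDimensional K V] {L : V →ₗ[K] V} {f : Dual K V} (hf : f ≠ 0)
    (hfL : f ∘ₗ L = 0) (hL : finrank K (ker L) ≤ 1) : range L = ker f := by
  refine Submodule.eq_of_le_of_finrank_le ?_ ?_
  · rintro _ ⟨v, rfl⟩
    exact LinearMap.congr_fun hfL v
  · have hrange := L.finrank_range_add_finrank_ker
    have hker := Dual.finrank_ker_add_one_of_ne_zero hf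
    omega

theorem Finset.sum_sum_eq_zero_of_antisymm {ι M : Type*} [Fintype ι] [AddCommGroup M]
    [IsAddTorsionFree M] {F : ι → ι → M} (hF : ∀ i j, F j i = -F i j) :
    ∑ i, ∑ j, F i j = 0 := by
  have h : ∑ i, ∑ j, F i j = -∑ i, ∑ j, F i j := by
    conv_lhs => rw [sum_comm]
    rw [← sum_neg_distrib]
    refine sum_congr rfl fun i _ => ?_
    rw [← sum_neg_distrib]
    exact sum_congr rfl fun j _ => hF i j
  exact self_eq_neg.mp h

variable {ι : Type*} [Fintype ι]

noncomputable def weightedLaplacian (w : ι → ι → ℝ) : (ι → ℝ) →ₗ[ℝ] ι → ℝ where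
  toFun z i := ∑ j, w i j * (z i - z j)
  map_add' x y := by
    ext i
    simp only [Pi.add_apply, ← sum_add_distrib]
    congr! 1 with j
    ring
  map_smul' c x := by
    ext i
    simp only [Pi.smul_apply, smul_eq_mul, RingHom.id_apply, mul_sum]
    congr! 1 with j
    ring

variable {w : ι → ι → ℝ}

theorem weightedLaplacian_apply (z : ι → ℝ) (i : ι) :
    weightedLaplacian w z i = ∑ j, w i j * (z i - z j) := rfl

theorem sum_weightedLaplacian (hw : ∀ i j, w i j = w j i) (z : ι → ℝ) :
    ∑ i, weightedLaplacian w z i = 0 :=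
  sum_sum_eq_zero_of_antisymm fun i j => by rw [hw]; ring

theorem two_mul_sum_mul_weightedLaplacian (hw : ∀ i j, w i j = w j i) (z : ι → ℝ) :
    2 * ∑ i, z i * weightedLaplacian w z i = ∑ i, ∑ j, w i j * (z i - z j) ^ 2 := by
  have h : ∑ i, ∑ j, w i j * (z i ^ 2 - z j ^ 2) = 0 :=
    sum_sum_eq_zero_of_antisymm fun i j => by rw [hw]; ring
  calc 2 * ∑ i, z i * weightedLaplacian w z i
      = ∑ i, ∑ j, (2 * (z i * (w i j * (z i - z j))) - w i j * (z i ^ 2 - z j ^ 2)) := by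
        simp only [sum_sub_distrib, h, sub_zero, weightedLaplacian_apply, mul_sum]
    _ = ∑ i, ∑ j, w i j * (z i - z j) ^ 2 := by
        congr! 2 with i _ j
        ring

theorem apply_eq_of_weightedLaplacian_eq_zero {G : SimpleGraph ι} (hw : ∀ i j, w i j = w j i)
    (hw₀ : ∀ i j, 0 ≤ w i j) (hG : ∀ i j, G.Adj i j → 0 < w i j) {z : ι → ℝ}
    (hz : weightedLaplacian w z = 0) {i j : ι} (hij : G.Reachable i j) : z i = z j := by
  have hterm_nonneg : ∀ i j, 0 ≤ w i j * (z i - z j) ^ 2 := fun i j =>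
    mul_nonneg (hw₀ i j) (sq_nonneg _)
  have henergy : ∑ i, ∑ j, w i j * (z i - z j) ^ 2 = 0 := by
    simp [← two_mul_sum_mul_weightedLaplacian hw, hz]
  have hterm : ∀ i j, w i j * (z i - z j) ^ 2 = 0 := fun i => by
    rw [Fintype.sum_eq_zero_iff_of_nonneg fun i => sum_nonneg fun j _ => hterm_nonneg i j]
      at henergy
    exact congr_fun ((Fintype.sum_eq_zero_iff_of_nonneg (hterm_nonneg i)).1 (congr_fun henergy i))
  have hadj : ∀ i j, G.Adj i j → z i = z j := fun i j hij => by
    simpa [(hG i j hij).ne', sub_eq_zero] using hterm i j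
  rw [SimpleGraph.reachable_iff_reflTransGen] at hij
  induction hij with
  | refl => rfl
  | tail _ hbc ih => exact ih.trans (hadj _ _ hbc)

theorem ker_weightedLaplacian_le_span_one {G : SimpleGraph ι} (hw : ∀ i j, w i j = w j i)
    (hw₀ : ∀ i j, 0 ≤ w i j) (hG : ∀ i j, G.Adj i j → 0 < w i j) (hconn : G.Connected) :
    LinearMap.ker (weightedLaplacian w) ≤ ℝ ∙ 1 := by
  intro z hz
  obtain ⟨i₀⟩ := hconn.nonempty
  refine Submodule.mem_span_singleton.2 ⟨z i₀, funext fun j => ?_⟩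
  simp [apply_eq_of_weightedLaplacian_eq_zero hw hw₀ hG hz (hconn i₀ j)]

theorem mem_range_weightedLaplacian_iff {G : SimpleGraph ι} (hw : ∀ i j, w i j = w j i)
    (hw₀ : ∀ i j, 0 ≤ w i j) (hG : ∀ i j, G.Adj i j → 0 < w i j) (hconn : G.Connected)
    {y : ι → ℝ} : y ∈ LinearMap.range (weightedLaplacian w) ↔ ∑ i, y i = 0 := by
  have : Nonempty ι := hconn.nonempty
  let sum : Dual ℝ (ι → ℝ) := ∑ i, LinearMap.proj i
  have hsum : ∀ y, sum y = ∑ i, y i := fun y => by simp [sum]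
  have hsum_ne : sum ≠ 0 := fun h => by simpa [hsum] using LinearMap.congr_fun h 1
  have hker : finrank ℝ (LinearMap.ker (weightedLaplacian w)) ≤ 1 :=
    (Submodule.finrank_mono (ker_weightedLaplacian_le_span_one hw hw₀ hG hconn)).trans
      (finrank_span_singleton one_ne_zero).le
  rw [LinearMap.range_eq_ker_of_comp_eq_zero hsum_ne
    (LinearMap.ext fun z => by simp [hsum, sum_weightedLaplacian hw]) hker,
    LinearMap.mem_ker, hsum]

theorem exists_forall_add_weightedLaplacian_nonpos_iff {G : SimpleGraph ι}
    (hw : ∀ i j, w i j = w j i) (hw₀ : ∀ i j, 0 ≤ w i j) (hG : ∀ i j, G.Adj i j → 0 < w i j)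
    (hconn : G.Connected) (a : ι → ℝ) :
    (∃ z, ∀ i, a i + weightedLaplacian w z i ≤ 0) ↔ ∑ i, a i ≤ 0 := by
  constructor
  · rintro ⟨z, hz⟩
    have hsum := sum_nonpos (s := univ) fun i _ => hz i
    rwa [sum_add_distrib, sum_weightedLaplacian hw, add_zero] at hsum
  · intro ha
    have : Nonempty ι := hconn.nonempty
    set mean := (∑ i, a i) / Fintype.card ι
    obtain ⟨z, hz⟩ : (fun i => mean - a i) ∈ LinearMap.range (weightedLaplacian w) := by
      rw [mem_range_weightedLaplacian_iff hw hw₀ hG hconn]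
      have hcard : (Fintype.card ι : ℝ) ≠ 0 := Nat.cast_ne_zero.2 Fintype.card_ne_zero
      simp [sum_sub_distrib, mean, mul_div_cancel₀ _ hcard]
    have hmean : mean ≤ 0 := div_nonpos_of_nonpos_of_nonneg ha (Nat.cast_nonneg _)
    exact ⟨z, fun i => by rw [congr_fun hz i]; linarith⟩

theorem weighted_mismatch_decoupling_general (N : ℕ)
    (w : Fin N → Fin N → ℝ)
    (hsymm : ∀ i j, w i j = w j i) (hnonneg : ∀ i j, 0 ≤ w i j)
    (hconn : (supportGraph w).Connected) (a : Fin N → ℝ) :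
    (∃ z : Fin N → ℝ,
        ∀ i : Fin N, a i + ∑ j ∈ Finset.univ.erase i, w i j * (z i - z j) ≤ 0)
      ↔ ∑ i, a i ≤ 0 := by
  have hadj : ∀ i j, (supportGraph w).Adj i j → 0 < w i j := fun i j h => by
    rcases ((SimpleGraph.fromRel_adj _ _ _).1 h).2 with h | h
    exacts [h, hsymm i j ▸ h]
  have herase : ∀ z i, ∑ j ∈ univ.erase i, w i j * (z i - z j) = weightedLaplacian w z i :=
    fun z i => sum_erase _ (by simp)
  simp only [herase]
  exact exists_forall_add_weightedLaplacian_nonpos_iff hsymm hnonneg hadj hconn a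

/-- Weighted, topology-dependent mismatch-variable decoupling principle: under a
connected support graph with symmetric nonnegative weights, the coupled
inequality `∑ i, a i ≤ 0` can be split exactly into per-agent local
inequalities using weighted mismatch variables. -/
theorem weighted_mismatch_decoupling (N : ℕ) (hN : 0 < N)
    (w : Fin N → Fin N → ℝ)
    (hsymm : ∀ i j, w i j = w j i) (hnonneg : ∀ i j, 0 ≤ w i j)
    (hconn : (supportGraph w).Connected) (a : Fin N → ℝ) :
    (∃ z : Fin N → ℝ,
        ∀ i : Fin N, a i + ∑ j ∈ Finset.univ.erase i, w i j * (z i - z j) ≤ 0)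
      ↔ ∑ i, a i ≤ 0 :=
  weighted_mismatch_decoupling_general N w hsymm hnonneg hconn a
end

section
/- Let h : ℝ → ℝ be differentiable and α : ℝ → ℝ be locally Lipschitz and strictly monotone increasing with α(0) = 0. Suppose h(0) ≥ 0 and deriv h t ≥ −α(h t) for all t ≥ 0. Then h t ≥ 0 for all t ≥ 0. -/
/-- Scalar comparison lemma at the core of the control barrier function theorem:
if `h` starts nonnegative and satisfies the CBF inequality
`deriv h t ≥ -α (h t)` for a locally Lipschitz extended class-K∞ function `α`,
then `h` stays nonnegative for all `t ≥ 0`. -/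
theorem cbf_comparison (h : ℝ → ℝ) (α : ℝ → ℝ)
    (hdiff : Differentiable ℝ h)
    (hlip : LocallyLipschitz α) (hmono : StrictMono α) (hα0 : α 0 = 0)
    (h0 : 0 ≤ h 0)
    (hineq : ∀ t ≥ (0 : ℝ), deriv h t ≥ -α (h t)) :
    ∀ t ≥ (0 : ℝ), 0 ≤ h t := by
  intro t0 ht0
  by_contra hneg
  push_neg at hneg
  -- the set of times in [0, t0] where h is nonnegative
  set S : Set ℝ := {t | t ∈ Set.Icc (0 : ℝ) t0 ∧ 0 ≤ h t} with hS
  have hScl : IsClosed S := by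
    apply IsClosed.inter isClosed_Icc
    exact isClosed_le continuous_const hdiff.continuous
  have h0S : (0 : ℝ) ∈ S := ⟨⟨le_refl 0, ht0⟩, h0⟩
  have hSne : S.Nonempty := ⟨0, h0S⟩
  have hSbdd : BddAbove S := ⟨t0, fun x hx => hx.1.2⟩
  set s := sSup S with hs
  have hsS : s ∈ S := hScl.csSup_mem hSne hSbdd
  have hs0 : 0 ≤ s := hsS.1.1
  have hst0 : s ≤ t0 := hsS.1.2
  have hhs : 0 ≤ h s := hsS.2
  have hslt : s < t0 := lt_of_le_of_ne hst0 (by intro he; rw [he] at hhs; linarith)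
  -- for t ∈ (s, t0], h t < 0
  have hbelow : ∀ t, s < t → t ≤ t0 → h t < 0 := by
    intro t hst htt0
    by_contra hle
    push_neg at hle
    have : t ∈ S := ⟨⟨le_trans hs0 hst.le, htt0⟩, hle⟩
    exact absurd (le_csSup hSbdd this) (not_le.mpr hst)
  -- so deriv h > 0 on (s, t0)
  have hpos : ∀ x ∈ interior (Set.Icc s t0), 0 < deriv h x := by
    rw [interior_Icc]
    intro x hx
    have hx0 : 0 ≤ x := le_trans hs0 hx.1.le
    have hneg' : h x < 0 := hbelow x hx.1 hx.2.le
    have : α (h x) < 0 := by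
      have := hmono hneg'
      rwa [hα0] at this
    have := hineq x hx0
    linarith
  have hmono' : StrictMonoOn h (Set.Icc s t0) :=
    strictMonoOn_of_deriv_pos (convex_Icc s t0) hdiff.continuous.continuousOn hpos
  have := hmono' ⟨le_refl s, hslt.le⟩ ⟨hslt.le, le_refl t0⟩ hslt
  linarith
end

section
/- Let (M, dist) be a metric space, Ω, Ωε ⊆ M, and δ > 0 such that every point of M at distance at most δ from Ωε lies in Ω. Let γ > 0, β₁ > 0, β₂ ≥ β₁, let x : ℝ → M, and let V : ℝ → ℝ be differentiable with deriv V t ≤ −γ · V(t) for all t ≥ 0 and β₁ · d_{Ωε}(x(t)) ≤ V(t) ≤ β₂ · d_{Ωε}(x(t)) for all t ≥ 0, where d_{Ωε}(y) = inf {dist(y, w) : w ∈ Ωε}. Then there exists T ≥ 0 such that x(t) ∈ Ω for all t ≥ T. -/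
open Metric

/-- Finite-time entry into the target region: if `V` decays as `V̇ ≤ -γ V` and
is sandwiched between multiples of the distance of the trajectory to the shrunk
target `Ωε`, and every point within distance `δ` of `Ωε` lies in `Ω`, then the
trajectory enters `Ω` in finite time and remains there. -/
theorem finite_time_entry {M : Type*} [MetricSpace M]
    (Ω Ωε : Set M) (δ : ℝ) (hδ : 0 < δ)
    (hmargin : ∀ y : M, infDist y Ωε ≤ δ → y ∈ Ω)
    (γ β₁ β₂ : ℝ) (hγ : 0 < γ) (hβ₁ : 0 < β₁) (hβ₂ : β₁ ≤ β₂)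
    (x : ℝ → M) (V : ℝ → ℝ) (hV : Differentiable ℝ V)
    (hdecay : ∀ t ≥ (0 : ℝ), deriv V t ≤ -γ * V t)
    (hsandwich : ∀ t ≥ (0 : ℝ),
      β₁ * infDist (x t) Ωε ≤ V t ∧ V t ≤ β₂ * infDist (x t) Ωε) :
    ∃ T ≥ (0 : ℝ), ∀ t ≥ T, x t ∈ Ω := by
  have hV0 : 0 ≤ V 0 := by
    have h := (hsandwich 0 le_rfl).1
    have h2 := infDist_nonneg (s := Ωε) (x := x 0)
    nlinarith
  have key : ∀ t ≥ (0:ℝ), V t * Real.exp (γ * t) ≤ V 0 := by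
    have hanti : AntitoneOn (fun t => V t * Real.exp (γ * t)) (Set.Ici 0) := by
      apply antitoneOn_of_deriv_nonpos (convex_Ici 0)
      · exact (hV.continuous.mul
          (Real.continuous_exp.comp (continuous_const.mul continuous_id))).continuousOn
      · exact fun t _ => ((hV t).hasDerivAt.mul
          (((hasDerivAt_id t).const_mul γ).exp)).differentiableAt.differentiableWithinAt
      · intro t ht
        rw [interior_Ici] at ht
        have hd : HasDerivAt (fun t => V t * Real.exp (γ * t))
            (deriv V t * Real.exp (γ * t) + V t * (Real.exp (γ * t) * (γ * 1))) t :=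
          (hV t).hasDerivAt.mul (((hasDerivAt_id t).const_mul γ).exp)
        rw [hd.deriv]
        have h1 := hdecay t ht.le
        have h2 := Real.exp_pos (γ * t)
        nlinarith
    intro t ht
    have := hanti (Set.self_mem_Ici) ht ht
    simpa using this
  set T : ℝ := max 0 (Real.log (V 0 / (δ * β₁)) / γ) with hT
  refine ⟨T, le_max_left _ _, fun t ht => ?_⟩
  have ht0 : (0:ℝ) ≤ t := le_trans (le_max_left _ _) ht
  have hexp : V 0 / (δ * β₁) ≤ Real.exp (γ * t) := by
    rcases le_or_gt (V 0 / (δ * β₁)) 0 with h | h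
    · exact h.trans (Real.exp_pos _).le
    · have hlog : Real.log (V 0 / (δ * β₁)) ≤ γ * t := by
        have : Real.log (V 0 / (δ * β₁)) / γ ≤ t := le_trans (le_max_right _ _) ht
        calc Real.log (V 0 / (δ * β₁)) = γ * (Real.log (V 0 / (δ * β₁)) / γ) := by
              field_simp
          _ ≤ γ * t := by nlinarith
      calc V 0 / (δ * β₁) = Real.exp (Real.log (V 0 / (δ * β₁))) := (Real.exp_log h).symm
        _ ≤ Real.exp (γ * t) := Real.exp_le_exp.mpr hlog
  have hVt : V t ≤ δ * β₁ := by
    have hk := key t ht0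
    have hep := Real.exp_pos (γ * t)
    have hδβ : 0 < δ * β₁ := mul_pos hδ hβ₁
    have : V 0 ≤ δ * β₁ * Real.exp (γ * t) := by
      rw [div_le_iff₀ hδβ] at hexp
      nlinarith
    nlinarith
  apply hmargin
  have hs := (hsandwich t ht0).1
  have : β₁ * infDist (x t) Ωε ≤ δ * β₁ := hs.trans hVt
  nlinarith
end

section
/- Let l be a positive natural number, γ > 0, d₀ > 0, and let x_i, x_j : ℝ → ℝ^l be differentiable. Define r : ℝ → ℝ by r(t) = ‖x_i(t) − x_j(t)‖². Suppose ‖x_i(0) − x_j(0)‖ ≥ d₀ and deriv r t ≥ −γ · (r(t) − d₀²) for all t ≥ 0. Then ‖x_i(t) − x_j(t)‖ ≥ d₀ for all t ≥ 0. -/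
/-! The barrier function `h t = ‖x_i t - x_j t‖² - d₀²` satisfies `h' ≥ -γ h`, so
`t ↦ exp (γ t) * h t` has nonnegative derivative and is monotone on `[0, ∞)`. Since it starts
nonnegative it stays so, hence `h t ≥ 0`, i.e. the distance stays at least `d₀`. -/

open Real Set

theorem monotoneOn_exp_mul_of_deriv_ge_neg_mul {f : ℝ → ℝ} {γ a : ℝ} (hf : Differentiable ℝ f)
    (hderiv : ∀ t ≥ a, -γ * f t ≤ deriv f t) :
    MonotoneOn (fun t => exp (γ * t) * f t) (Ici a) := by
  have hg : ∀ t, HasDerivAt (fun t => exp (γ * t) * f t)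
      (exp (γ * t) * (deriv f t + γ * f t)) t := by
    intro t
    have hexp : HasDerivAt (fun t => exp (γ * t)) (exp (γ * t) * γ) t :=
      ((hasDerivAt_id t).const_mul γ).exp.congr_deriv (by simp)
    exact (hexp.mul (hf t).hasDerivAt).congr_deriv (by ring)
  refine monotoneOn_of_deriv_nonneg (convex_Ici a)
    (fun t _ => (hg t).continuousAt.continuousWithinAt)
    (fun t _ => (hg t).differentiableAt.differentiableWithinAt) ?_
  intro t ht
  rw [interior_Ici, mem_Ioi] at ht
  rw [(hg t).deriv]
  have := hderiv t ht.le
  exact mul_nonneg (exp_pos _).le (by linarith)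

theorem nonneg_of_deriv_ge_neg_mul {f : ℝ → ℝ} {γ a : ℝ} (hf : Differentiable ℝ f)
    (ha : 0 ≤ f a) (hderiv : ∀ t ≥ a, -γ * f t ≤ deriv f t) :
    ∀ t ≥ a, 0 ≤ f t := by
  intro t ht
  have hmono := monotoneOn_exp_mul_of_deriv_ge_neg_mul hf hderiv self_mem_Ici ht ht
  have : 0 ≤ exp (γ * t) * f t := (mul_nonneg (exp_pos _).le ha).trans hmono
  exact nonneg_of_mul_nonneg_right this (exp_pos _)

theorem collision_avoidance_general (l : ℕ) (γ d₀ : ℝ)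
    (hd₀ : 0 < d₀)
    (xi xj : ℝ → EuclideanSpace ℝ (Fin l))
    (hxi : Differentiable ℝ xi) (hxj : Differentiable ℝ xj)
    (r : ℝ → ℝ) (hr : ∀ t, r t = ‖xi t - xj t‖ ^ 2)
    (h0 : d₀ ≤ ‖xi 0 - xj 0‖)
    (hcbf : ∀ t ≥ (0 : ℝ), deriv r t ≥ -γ * (r t - d₀ ^ 2)) :
    ∀ t ≥ (0 : ℝ), d₀ ≤ ‖xi t - xj t‖ := by
  have hr_diff : Differentiable ℝ r := funext hr ▸ (hxi.sub hxj).norm_sq ℝ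
  have hbarrier : ∀ t ≥ (0 : ℝ), 0 ≤ r t - d₀ ^ 2 := by
    refine nonneg_of_deriv_ge_neg_mul (γ := γ) (hr_diff.sub_const _) ?_ fun t ht => ?_
    · rw [hr, sub_nonneg]
      exact pow_le_pow_left₀ hd₀.le h0 2
    · rw [deriv_sub_const]
      exact hcbf t ht
  intro t ht
  have hsq := hbarrier t ht
  rw [hr, sub_nonneg] at hsq
  exact (pow_le_pow_iff_left₀ hd₀.le (norm_nonneg _) two_ne_zero).mp hsq

/-- Inter-agent collision avoidance from the distance-based CBF
`h = ‖x_i - x_j‖² - d₀²` with linear class-K∞ function `α(s) = γ s`: if the CBF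
condition holds along the trajectories and the agents start at distance at
least `d₀`, they never get closer than `d₀`. -/
theorem collision_avoidance (l : ℕ) (hl : 0 < l) (γ d₀ : ℝ)
    (hγ : 0 < γ) (hd₀ : 0 < d₀)
    (xi xj : ℝ → EuclideanSpace ℝ (Fin l))
    (hxi : Differentiable ℝ xi) (hxj : Differentiable ℝ xj)
    (r : ℝ → ℝ) (hr : ∀ t, r t = ‖xi t - xj t‖ ^ 2)
    (h0 : d₀ ≤ ‖xi 0 - xj 0‖)
    (hcbf : ∀ t ≥ (0 : ℝ), deriv r t ≥ -γ * (r t - d₀ ^ 2)) :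
    ∀ t ≥ (0 : ℝ), d₀ ≤ ‖xi t - xj t‖ :=
  collision_avoidance_general l γ d₀ hd₀ xi xj hxi hxj r hr h0 hcbf
end
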